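/- For every cubic graph G, ν₃(G) ≥ (7/6)·|V(G)|. -/

import Mathlib

/-- A multigraph on vertex type `V` with edge type `E`: each edge has a pair of
endpoints (an element of `Sym2 V`), and there are no loops.  Multiple edges
(distinct edges with the same endpoints) are allowed. -/
structure Multigraph (V : Type) (E : Type) where
  ends : E → Sym2 V
  no_loops : ∀ e : E, ¬ (ends e).IsDiag

namespace Multigraph

variable {V E : Type}

/-- The degree of a vertex `v` inside the set `S` of edges:
the number of edges of `S` incident to `v`. -/
noncomputable def degreeIn (G : Multigraph V E) (S : Set E) (v : V) : ℕ :=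
  {e ∈ S | v ∈ G.ends e}.ncard

/-- The degree of a vertex: the number of edges incident to it. -/
noncomputable def degree (G : Multigraph V E) (v : V) : ℕ :=
  G.degreeIn Set.univ v

/-- A cubic graph: every vertex has degree exactly `3`. -/
def IsCubic (G : Multigraph V E) : Prop :=
  ∀ v : V, G.degree v = 3

/-- Two edges are adjacent if they share an endpoint. -/
def EdgeAdj (G : Multigraph V E) (e f : E) : Prop :=
  ∃ v : V, v ∈ G.ends e ∧ v ∈ G.ends f

/-- A set of edges is a matching if no two distinct edges of it share an endpoint. -/
def IsMatching (G : Multigraph V E) (M : Set E) : Prop :=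
  ∀ e ∈ M, ∀ f ∈ M, e ≠ f → ¬ G.EdgeAdj e f

/-- A perfect matching (`1`-factor): a matching covering every vertex. -/
def IsPerfectMatching (G : Multigraph V E) (F : Set E) : Prop :=
  G.IsMatching F ∧ ∀ v : V, ∃ e ∈ F, v ∈ G.ends e

/-- A `2`-factor: a spanning subgraph in which every vertex has degree exactly `2`. -/
def Is2Factor (G : Multigraph V E) (F : Set E) : Prop :=
  ∀ v : V, G.degreeIn F v = 2

/-- `c` is a proper edge coloring of the (spanning) subgraph with edge set `S`:
distinct adjacent edges of `S` get distinct colors. -/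
def IsProperColoring (G : Multigraph V E) (S : Set E) {k : ℕ} (c : E → Fin k) : Prop :=
  ∀ e ∈ S, ∀ f ∈ S, e ≠ f → G.EdgeAdj e f → c e ≠ c f

/-- The (spanning) subgraph with edge set `S` is `k`-edge-colorable. -/
def Colorable (G : Multigraph V E) (k : ℕ) (S : Set E) : Prop :=
  ∃ c : E → Fin k, G.IsProperColoring S c

/-- `H` is (the edge set of) a maximum `k`-edge-colorable subgraph of `G`. -/
def IsMaxColorable (G : Multigraph V E) (k : ℕ) (H : Set E) : Prop :=
  G.Colorable k H ∧ ∀ S : Set E, G.Colorable k S → S.ncard ≤ H.ncard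

/-- `ν_k(G)`: the number of edges of a maximum `k`-edge-colorable subgraph of `G`. -/
noncomputable def nu (G : Multigraph V E) (k : ℕ) : ℕ :=
  sSup {n : ℕ | ∃ S : Set E, G.Colorable k S ∧ S.ncard = n}

/-- The set of colors appearing (under the coloring `c` of the subgraph `H`)
on the edges of `H` incident to the vertex `w`. -/
def colorsAt (G : Multigraph V E) (H : Set E) {k : ℕ} (c : E → Fin k) (w : V) :
    Set (Fin k) :=
  {γ : Fin k | ∃ f ∈ H, w ∈ G.ends f ∧ c f = γ}

end Multigraph

/-!
Take a maximum 3-edge-colorable subgraph `S` with a proper coloring `c`, and among these one with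
the most full vertices (vertices of degree 3 in `S`). A Kempe-chain argument shows that every
vertex has degree at least 2 in `S`, so `2|S| = 2|V| + #full`. An uncovered edge `uv` claims the
far end `w` of the edge `uw` of `S` whose color is missing at `v`. Rotating `uv` into `S` in place
of `uw` keeps `S` maximum and makes `v` full, so `w` must already be full. Recoloring arguments
show that a vertex is claimed by at most two uncovered edges, and by only one if that edge claims
nothing else; a Hall-type count then bounds the number of uncovered edges by `#full`. With
`3|V| = 2|E|` this gives `6|S| ≥ 7|V|`.
-/

namespace Finset

theorem card_insert_erase {α : Type*} [DecidableEq α] {s : Finset α} {a b : α} (ha : a ∉ s)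
    (hb : b ∈ s) : (insert a (s.erase b)).card = s.card := by
  rw [card_insert_of_notMem fun h => ha (mem_of_mem_erase h), card_erase_add_one hb]

variable {ι α : Type*} [DecidableEq α] {s : Finset ι} {t : ι → Finset α}

theorem card_le_card_biUnion_of_two_le_card (ht : ∀ i ∈ s, 2 ≤ (t i).card)
    (hle : ∀ a, (s.filter (a ∈ t ·)).card ≤ 2) : s.card ≤ (s.biUnion t).card := by
  have := card_mul_le_card_mul (fun i a => a ∈ t i) (s := s) (t := s.biUnion t) (m := 2)
    (n := 2) (fun i hi => ?_) fun a _ => hle a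
  · omega
  · rw [bipartiteAbove, filter_mem_eq_inter, inter_eq_right.mpr (subset_biUnion_of_mem t hi)]
    exact ht i hi

theorem card_le_card_biUnion_of_forall_eq_or_eq_or_eq (hne : ∀ i ∈ s, (t i).Nonempty)
    (hle : ∀ a, ∀ i ∈ s, ∀ j ∈ s, ∀ l ∈ s, a ∈ t i → a ∈ t j → a ∈ t l →
      i = j ∨ i = l ∨ j = l)
    (hsingle : ∀ i ∈ s, ∀ j ∈ s, i ≠ j → ∀ a, t i = {a} → a ∉ t j) :
    s.card ≤ (s.biUnion t).card := by
  classical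
  set s₁ := s.filter fun i => (t i).card = 1
  set s₂ := s.filter fun i => ¬ (t i).card = 1
  have hdisj : ∀ i ∈ s₁, ∀ j ∈ s, i ≠ j → Disjoint (t i) (t j) := fun i hi j hj hij => by
    obtain ⟨a, ha⟩ := card_eq_one.mp (mem_filter.mp hi).2
    rw [ha, disjoint_singleton_left]
    exact hsingle i (mem_filter.mp hi).1 j hj hij a ha
  have h₁ : s₁.card ≤ (s₁.biUnion t).card :=
    card_le_card_biUnion (fun i hi j hj hij => hdisj i hi j (mem_filter.mp hj).1 hij)
      fun i hi => hne i (mem_filter.mp hi).1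
  have h₂ : s₂.card ≤ (s₂.biUnion t).card := by
    refine card_le_card_biUnion_of_two_le_card (fun i hi => ?_) fun a => ?_
    · have := (hne i (mem_filter.mp hi).1).card_pos
      have := (mem_filter.mp hi).2
      omega
    · by_contra! h
      obtain ⟨i, hi, j, hj, l, hl, hij, hil, hjl⟩ := two_lt_card.mp h
      simp only [s₂, mem_filter] at hi hj hl
      rcases hle a i hi.1.1 j hj.1.1 l hl.1.1 hi.2 hj.2 hl.2 with h | h | h
      exacts [hij h, hil h, hjl h]
  have h₁₂ : Disjoint (s₁.biUnion t) (s₂.biUnion t) :=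
    (disjoint_biUnion_left _ _ _).mpr fun i hi => (disjoint_biUnion_right _ _ _).mpr fun j hj =>
      hdisj i hi j (mem_filter.mp hj).1 fun hij => (mem_filter.mp hj).2 (hij ▸ (mem_filter.mp hi).2)
  calc s.card = s₁.card + s₂.card := (card_filter_add_card_filter_not _).symm
    _ ≤ (s₁.biUnion t).card + (s₂.biUnion t).card := add_le_add h₁ h₂
    _ = (s.biUnion t).card := by
      rw [← card_union_of_disjoint h₁₂, ← union_biUnion, filter_union_filter_not_eq]

end Finset

namespace Multigraph

open Finset

variable {V E : Type}

section Ends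

variable (G : Multigraph V E)

lemma ne_of_ends_eq {e : E} {u v : V} (h : G.ends e = s(u, v)) : u ≠ v :=
  fun huv => G.no_loops e (by rw [h, huv]; exact Sym2.mk_isDiag_iff.mpr rfl)

lemma mem_ends_left {e : E} {u v : V} (h : G.ends e = s(u, v)) : u ∈ G.ends e :=
  h ▸ Sym2.mem_mk_left u v

lemma mem_ends_right {e : E} {u v : V} (h : G.ends e = s(u, v)) : v ∈ G.ends e :=
  h ▸ Sym2.mem_mk_right u v

lemma exists_ends_eq (e : E) : ∃ u v, u ≠ v ∧ G.ends e = s(u, v) := by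
  obtain ⟨⟨u, v⟩, h⟩ := Quot.exists_rep (G.ends e)
  exact ⟨u, v, G.ne_of_ends_eq h.symm, h.symm⟩

lemma exists_ends_eq_of_mem {e : E} {v : V} (hv : v ∈ G.ends e) :
    ∃ w, w ≠ v ∧ G.ends e = s(v, w) := by
  obtain ⟨w, h⟩ := Sym2.mem_iff_exists.mp hv
  exact ⟨w, (G.ne_of_ends_eq h).symm, h⟩

lemma eq_or_eq_of_mem_ends {g : E} {x y z : V} (hx : x ∈ G.ends g) (hy : y ∈ G.ends g)
    (hxy : x ≠ y) (hz : z ∈ G.ends g) : z = x ∨ z = y := by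
  rwa [(Sym2.mem_and_mem_iff hxy).mp ⟨hx, hy⟩, Sym2.mem_iff] at hz

variable {G} in
lemma EdgeAdj.symm {e f : E} (h : G.EdgeAdj e f) : G.EdgeAdj f e :=
  let ⟨v, he, hf⟩ := h; ⟨v, hf, he⟩

end Ends

section Incidence

variable [DecidableEq V]

variable (G : Multigraph V E) in
def edgesAt (S : Finset E) (v : V) : Finset E := S.filter (v ∈ G.ends ·)

variable (G : Multigraph V E) in
def verts (S : Finset E) : Finset V := S.biUnion (G.ends · |>.toFinset)

variable (G : Multigraph V E) in
def fullVerts [Fintype V] (S : Finset E) : Finset V :=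
  univ.filter fun x => (G.edgesAt S x).card = 3

variable {G : Multigraph V E}

@[simp] lemma mem_edgesAt {S : Finset E} {v : V} {e : E} :
    e ∈ G.edgesAt S v ↔ e ∈ S ∧ v ∈ G.ends e := mem_filter

@[simp] lemma mem_verts {S : Finset E} {v : V} : v ∈ G.verts S ↔ ∃ e ∈ S, v ∈ G.ends e := by
  simp [verts]

@[simp] lemma mem_fullVerts [Fintype V] {S : Finset E} {x : V} :
    x ∈ G.fullVerts S ↔ (G.edgesAt S x).card = 3 := by
  simp [fullVerts]

lemma edgesAt_mono {S T : Finset E} (h : S ⊆ T) (v : V) : G.edgesAt S v ⊆ G.edgesAt T v :=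
  filter_subset_filter _ h

lemma edgesAt_insert_erase [DecidableEq E] {S : Finset E} {e g : E} {x : V}
    (hxg : x ∉ G.ends g) :
    G.edgesAt (insert e (S.erase g)) x =
      if x ∈ G.ends e then insert e (G.edgesAt S x) else G.edgesAt S x := by
  rw [edgesAt, filter_insert, filter_erase, ← edgesAt,
    erase_eq_of_notMem fun h => hxg (mem_edgesAt.mp h).2]

lemma card_ends_toFinset (e : E) : (G.ends e).toFinset.card = 2 :=
  Sym2.card_toFinset_of_not_isDiag _ (G.no_loops e)

lemma sum_card_edgesAt [Fintype V] (S : Finset E) :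
    ∑ v, (G.edgesAt S v).card = 2 * S.card := by
  have := sum_card_bipartiteAbove_eq_sum_card_bipartiteBelow (s := S) (t := univ)
    (r := fun e v => v ∈ G.ends e)
  refine this.symm.trans ?_
  rw [mul_comm, ← smul_eq_mul, ← sum_const]
  refine sum_congr rfl fun e _ => ?_
  rw [← card_ends_toFinset (G := G) e]
  congr 1
  ext v
  simp [bipartiteAbove]

lemma sum_verts_card_edgesAt [Fintype V] (S : Finset E) :
    ∑ v ∈ G.verts S, (G.edgesAt S v).card = 2 * S.card := by
  rw [← G.sum_card_edgesAt, sum_subset (subset_univ _)]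
  intro v _ hv
  rw [card_eq_zero, eq_empty_iff_forall_notMem]
  exact fun e he => hv (mem_verts.mpr ⟨e, (mem_edgesAt.mp he).1, (mem_edgesAt.mp he).2⟩)

lemma card_verts_insert_le [DecidableEq E] {F : Finset E} {f h : E} (hf : f ∈ F)
    (hadj : G.EdgeAdj f h) : (G.verts (insert h F)).card ≤ (G.verts F).card + 1 := by
  obtain ⟨x, hxf, hxh⟩ := hadj
  have hx : x ∈ (G.ends h).toFinset ∩ G.verts F :=
    mem_inter.mpr ⟨Sym2.mem_toFinset.mpr hxh, mem_verts.mpr ⟨f, hf, hxf⟩⟩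
  have := card_union_add_card_inter (G.ends h).toFinset (G.verts F)
  rw [card_ends_toFinset] at this
  have hins : G.verts (insert h F) = (G.ends h).toFinset ∪ G.verts F := biUnion_insert
  rw [hins]
  have := card_pos.mpr ⟨x, hx⟩
  omega

/-- Growing `K` from `g₀` one adjacent edge at a time adds at most one vertex per edge. -/
lemma card_verts_le_card_add_one [DecidableEq E] {K : Finset E} {g₀ : E} (hg₀ : g₀ ∈ K)
    (hK : ∀ F ⊆ K, g₀ ∈ F → F ≠ K → ∃ f ∈ F, ∃ h ∈ K \ F, G.EdgeAdj f h) :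
    (G.verts K).card ≤ K.card + 1 := by
  suffices h : ∀ n, ∀ F ⊆ K, g₀ ∈ F → (K \ F).card = n →
      (G.verts K).card ≤ (G.verts F).card + n by
    have := h _ {g₀} (singleton_subset_iff.mpr hg₀) (mem_singleton_self g₀) rfl
    have hsingle : G.verts {g₀} = (G.ends g₀).toFinset := singleton_biUnion
    rw [card_sdiff_of_subset (singleton_subset_iff.mpr hg₀), card_singleton, hsingle,
      card_ends_toFinset] at this
    have := card_pos.mpr ⟨g₀, hg₀⟩
    omega
  intro n
  induction n with
  | zero =>
    intro F hFK _ hn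
    rw [card_eq_zero, sdiff_eq_empty_iff_subset] at hn
    rw [subset_antisymm hFK hn, add_zero]
  | succ n ih =>
    intro F hFK hg₀F hn
    obtain ⟨f, hf, h, hh, hadj⟩ := hK F hFK hg₀F (by rintro rfl; simp at hn)
    have hcard : (K \ insert h F).card = n := by
      rw [sdiff_insert, card_erase_of_mem hh, hn, Nat.add_sub_cancel]
    have := ih (insert h F) (insert_subset (mem_sdiff.mp hh).1 hFK) (mem_insert_of_mem hg₀F)
      hcard
    have := card_verts_insert_le hf hadj
    omega

lemma card_filter_card_edgesAt_eq_one_le_two [Fintype V] {K : Finset E}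
    (hK : (G.verts K).card ≤ K.card + 1) (hdeg : ∀ x, (G.edgesAt K x).card ≤ 2) :
    ((G.verts K).filter fun x => (G.edgesAt K x).card = 1).card ≤ 2 := by
  have hle : ∑ x ∈ G.verts K,
      ((G.edgesAt K x).card + if (G.edgesAt K x).card = 1 then 1 else 0) ≤ ∑ _x ∈ G.verts K, 2 := by
    refine sum_le_sum fun x _ => ?_
    have := hdeg x
    split_ifs <;> omega
  rw [sum_add_distrib, sum_verts_card_edgesAt, ← card_filter, sum_const, smul_eq_mul] at hle
  omega

end Incidence

section Cubic

variable [DecidableEq V] [Fintype E] {G : Multigraph V E} {S : Finset E}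

lemma IsCubic.card_edgesAt_univ (hG : G.IsCubic) (v : V) : (G.edgesAt univ v).card = 3 := by
  rw [← hG v, degree, degreeIn, ← Set.ncard_coe_finset]
  congr 1
  ext e
  simp

lemma IsCubic.card_edgesAt_le (hG : G.IsCubic) (S : Finset E) (v : V) :
    (G.edgesAt S v).card ≤ 3 :=
  hG.card_edgesAt_univ v ▸ card_le_card (edgesAt_mono (subset_univ S) v)

lemma IsCubic.card_edgesAt_add_card_edgesAt_compl [DecidableEq E] (hG : G.IsCubic)
    (S : Finset E) (v : V) : (G.edgesAt S v).card + (G.edgesAt Sᶜ v).card = 3 := by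
  have hdisj : Disjoint (G.edgesAt S v) (G.edgesAt Sᶜ v) :=
    disjoint_filter_filter disjoint_compl_right
  rw [← hG.card_edgesAt_univ v, ← card_union_of_disjoint hdisj, edgesAt, edgesAt, edgesAt,
    ← filter_union, union_compl]

lemma IsCubic.card_edgesAt_le_two (hG : G.IsCubic) {e : E} (he : e ∉ S) {v : V}
    (hv : v ∈ G.ends e) : (G.edgesAt S v).card ≤ 2 := by
  classical
  have := hG.card_edgesAt_add_card_edgesAt_compl S v
  have := card_pos.mpr ⟨e, mem_edgesAt.mpr ⟨mem_compl.mpr he, hv⟩⟩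
  omega

lemma IsCubic.card_edgesAt_le_one (hG : G.IsCubic) {e f : E} (hef : e ≠ f) (he : e ∉ S)
    (hf : f ∉ S) {v : V} (hve : v ∈ G.ends e) (hvf : v ∈ G.ends f) :
    (G.edgesAt S v).card ≤ 1 := by
  classical
  have := hG.card_edgesAt_add_card_edgesAt_compl S v
  have := one_lt_card.mpr ⟨e, mem_edgesAt.mpr ⟨mem_compl.mpr he, hve⟩,
    f, mem_edgesAt.mpr ⟨mem_compl.mpr hf, hvf⟩, hef⟩
  omega

lemma IsCubic.exists_ne_notMem_of_card_edgesAt_le_one (hG : G.IsCubic) {v : V}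
    (hv : (G.edgesAt S v).card ≤ 1) :
    ∃ e f, e ≠ f ∧ e ∉ S ∧ f ∉ S ∧ v ∈ G.ends e ∧ v ∈ G.ends f := by
  classical
  have := hG.card_edgesAt_add_card_edgesAt_compl S v
  obtain ⟨e, he, f, hf, hef⟩ := one_lt_card.mp (show 1 < (G.edgesAt Sᶜ v).card by omega)
  simp only [mem_edgesAt, mem_compl] at he hf
  exact ⟨e, f, hef, he.1, hf.1, he.2, hf.2⟩

lemma IsCubic.three_mul_card [Fintype V] (hG : G.IsCubic) :
    3 * Fintype.card V = 2 * Fintype.card E := by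
  have := G.sum_card_edgesAt (univ : Finset E)
  rwa [sum_congr rfl fun v _ => hG.card_edgesAt_univ v, sum_const, smul_eq_mul, card_univ,
    card_univ, mul_comm] at this

end Cubic

section Coloring

variable {G : Multigraph V E} {k : ℕ} {c : E → Fin k}

lemma IsProperColoring.mono {S T : Set E} (h : S ⊆ T) (hc : G.IsProperColoring T c) :
    G.IsProperColoring S c :=
  fun e he f hf => hc e (h he) f (h hf)

lemma IsProperColoring.eq_of_color_eq {S : Set E} (hc : G.IsProperColoring S c) {v : V}
    {e f : E} (he : e ∈ S) (hf : f ∈ S) (hve : v ∈ G.ends e) (hvf : v ∈ G.ends f)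
    (hcef : c e = c f) : e = f := by
  by_contra hne
  exact hc e he f hf hne ⟨v, hve, hvf⟩ hcef

lemma IsProperColoring.insert_update [DecidableEq E] {S : Set E} (hc : G.IsProperColoring S c)
    {g : E} {ζ : Fin k} (hζ : ∀ f ∈ S, f ≠ g → G.EdgeAdj g f → c f ≠ ζ) :
    G.IsProperColoring (insert g S) (Function.update c g ζ) := by
  intro f hf f' hf' hne hadj
  by_cases hfg : f = g
  · subst hfg
    rw [Function.update_self, Function.update_of_ne hne.symm]
    exact (hζ f' (hf'.resolve_left hne.symm) hne.symm hadj).symm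
  by_cases hf'g : f' = g
  · subst hf'g
    rw [Function.update_self, Function.update_of_ne hne]
    exact hζ f (hf.resolve_left hfg) hne hadj.symm
  rw [Function.update_of_ne hfg, Function.update_of_ne hf'g]
  exact hc f (hf.resolve_left hfg) f' (hf'.resolve_left hf'g) hne hadj

lemma IsProperColoring.insert_update_of_notMem_colorsAt [DecidableEq E] {S : Set E}
    (hc : G.IsProperColoring S c) {e : E} {ζ : Fin k}
    (hζ : ∀ x ∈ G.ends e, ζ ∉ G.colorsAt S c x) :
    G.IsProperColoring (insert e S) (Function.update c e ζ) :=
  hc.insert_update fun _ hf _ ⟨x, hxe, hxf⟩ hcf => hζ x hxe ⟨_, hf, hxf, hcf⟩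

lemma IsProperColoring.rotate [DecidableEq E] {S : Finset E} (hc : G.IsProperColoring ↑S c)
    {e g : E} {p q : V} (hends : G.ends e = s(p, q)) (hg : g ∈ S) (hpg : p ∈ G.ends g)
    (hq : c g ∉ G.colorsAt ↑S c q) :
    G.IsProperColoring ↑(insert e (S.erase g)) (Function.update c e (c g)) := by
  rw [coe_insert]
  refine (hc.mono (coe_subset.mpr (erase_subset g S))).insert_update_of_notMem_colorsAt ?_
  intro x hx ⟨f, hf, hxf, hcf⟩
  obtain ⟨hfg, hf⟩ := mem_erase.mp hf
  rw [hends, Sym2.mem_iff] at hx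
  rcases hx with rfl | rfl
  · exact hfg (hc.eq_of_color_eq hf hg hxf hpg hcf)
  · exact hq ⟨f, hf, hxf, hcf⟩

lemma IsProperColoring.insert_update_update [DecidableEq E] {S : Finset E}
    (hc : G.IsProperColoring ↑S c)
    {f g : E} {x y w : V} (hg : g ∈ S) (hends_g : G.ends g = s(x, w))
    (hends_f : G.ends f = s(x, y)) {ζ : Fin k} (hζ : ζ ≠ c g)
    (hζx : ζ ∉ G.colorsAt ↑(S.erase g) c x) (hζw : ζ ∉ G.colorsAt ↑(S.erase g) c w)
    (hy : c g ∉ G.colorsAt ↑S c y) :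
    G.IsProperColoring (insert f ↑S) (Function.update (Function.update c g ζ) f (c g)) := by
  have hc' : G.IsProperColoring ↑S (Function.update c g ζ) := by
    have := hc.insert_update (g := g) (ζ := ζ) fun h hh hne ⟨z, hzg, hzh⟩ hcol => by
      have hh' : h ∈ S.erase g := mem_erase.mpr ⟨hne, hh⟩
      rcases G.eq_or_eq_of_mem_ends (G.mem_ends_left hends_g) (G.mem_ends_right hends_g)
        (G.ne_of_ends_eq hends_g) hzg with rfl | rfl
      exacts [hζx ⟨h, hh', hzh, hcol⟩, hζw ⟨h, hh', hzh, hcol⟩]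
    rwa [Set.insert_eq_of_mem (mem_coe.mpr hg)] at this
  refine hc'.insert_update_of_notMem_colorsAt fun z hz ⟨h, hh, hzh, hch⟩ => ?_
  rcases G.eq_or_eq_of_mem_ends (G.mem_ends_left hends_f) (G.mem_ends_right hends_f)
    (G.ne_of_ends_eq hends_f) hz with rfl | rfl
  · by_cases hhg : h = g
    · rw [hhg, Function.update_self] at hch
      exact hζ hch
    · rw [Function.update_of_ne hhg] at hch
      exact hhg (hc.eq_of_color_eq hh hg hzh (G.mem_ends_left hends_g) hch)
  · have hhg : h ≠ g := by
      rintro rfl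
      exact hy ⟨h, hg, hzh, rfl⟩
    rw [Function.update_of_ne hhg] at hch
    exact hy ⟨h, hh, hzh, hch⟩

section Finite

variable [DecidableEq V] {S : Finset E}

lemma colorsAt_eq_image (S : Finset E) (c : E → Fin k) (v : V) :
    G.colorsAt ↑S c v = ↑((G.edgesAt S v).image c) := by
  ext γ
  simp [colorsAt, and_assoc]

lemma exists_notMem_colorsAt {v : V} (h : (G.edgesAt S v).card < k) :
    ∃ ζ, ζ ∉ G.colorsAt ↑S c v := by
  by_contra! hall
  have : (univ : Finset (Fin k)) ⊆ (G.edgesAt S v).image c := fun ζ _ => by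
    simpa [colorsAt_eq_image] using hall ζ
  have := (card_le_card this).trans card_image_le
  simp only [card_univ, Fintype.card_fin] at this
  omega

lemma card_le_card_edgesAt_of_subset_colorsAt {v : V} {s : Finset (Fin k)}
    (hs : ∀ ζ ∈ s, ζ ∈ G.colorsAt ↑S c v) : s.card ≤ (G.edgesAt S v).card :=
  (card_le_card fun ζ hζ => by simpa [colorsAt_eq_image] using hs ζ hζ).trans card_image_le

end Finite

end Coloring

section MaxColorable

variable {G : Multigraph V E} {k : ℕ} {S : Finset E} {c : E → Fin k}

lemma IsMaxColorable.card_le (hS : G.IsMaxColorable k ↑S) {T : Finset E}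
    (hT : G.Colorable k ↑T) : T.card ≤ S.card := by
  simpa only [Set.ncard_coe_finset] using hS.2 _ hT

lemma IsMaxColorable.of_card_eq (hS : G.IsMaxColorable k ↑S) {T : Finset E}
    (hT : G.Colorable k ↑T) (hcard : T.card = S.card) : G.IsMaxColorable k ↑T :=
  ⟨hT, fun R hR => by simpa only [Set.ncard_coe_finset, hcard] using hS.2 R hR⟩

lemma IsMaxColorable.not_isProperColoring_insert (hS : G.IsMaxColorable k ↑S) {T : Finset E}
    (hT : T.card = S.card) {e : E} (he : e ∉ T) {c' : E → Fin k} :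
    ¬ G.IsProperColoring (insert e ↑T) c' := by
  classical
  intro hc
  have := hS.card_le (T := insert e T) ⟨c', by rwa [coe_insert]⟩
  rw [card_insert_of_notMem he] at this
  omega

lemma IsMaxColorable.mem_colorsAt_of_notMem [DecidableEq E] (hS : G.IsMaxColorable k ↑S)
    (hc : G.IsProperColoring ↑S c) {e : E} (he : e ∉ S) {u v : V}
    (hends : G.ends e = s(u, v)) {ζ : Fin k} (hu : ζ ∉ G.colorsAt ↑S c u) :
    ζ ∈ G.colorsAt ↑S c v := by
  by_contra hv
  refine hS.not_isProperColoring_insert rfl he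
    (hc.insert_update_of_notMem_colorsAt (ζ := ζ) ?_)
  intro x hx
  rw [hends, Sym2.mem_iff] at hx
  rcases hx with rfl | rfl
  exacts [hu, hv]

end MaxColorable

section Kempe

variable {k : ℕ}

def bicolored (S : Finset E) (c : E → Fin k) (δ ε : Fin k) : Finset E :=
  S.filter fun g => c g = δ ∨ c g = ε

variable (G : Multigraph V E) (S : Finset E) (c : E → Fin k) (δ ε : Fin k)

def KempeReach : E → E → Prop :=
  Relation.ReflTransGen fun g h => g ∈ bicolored S c δ ε ∧ h ∈ bicolored S c δ ε ∧ G.EdgeAdj g h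

open Classical in
noncomputable def kempeSwap (g₀ : E) (g : E) : Fin k :=
  if G.KempeReach S c δ ε g₀ g then Equiv.swap δ ε (c g) else c g

open Classical in
noncomputable def kempeChain [Fintype E] (g₀ : E) : Finset E :=
  univ.filter (G.KempeReach S c δ ε g₀)

variable {G S c δ ε} {g₀ g : E}

lemma bicolored_comm : bicolored S c δ ε = bicolored S c ε δ := by
  simp only [bicolored, or_comm]

lemma KempeReach.mem_bicolored (h₀ : g₀ ∈ bicolored S c δ ε) (h : G.KempeReach S c δ ε g₀ g) :
    g ∈ bicolored S c δ ε := by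
  induction h with
  | refl => exact h₀
  | tail _ hstep _ => exact hstep.2.1

lemma kempeSwap_of_reach (h : G.KempeReach S c δ ε g₀ g) :
    G.kempeSwap S c δ ε g₀ g = Equiv.swap δ ε (c g) := if_pos h

lemma kempeSwap_of_not_reach (h : ¬ G.KempeReach S c δ ε g₀ g) :
    G.kempeSwap S c δ ε g₀ g = c g := if_neg h

@[simp] lemma mem_kempeChain [Fintype E] :
    g ∈ G.kempeChain S c δ ε g₀ ↔ G.KempeReach S c δ ε g₀ g := by
  simp [kempeChain]

lemma IsProperColoring.kempeSwap (hc : G.IsProperColoring ↑S c)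
    (h₀ : g₀ ∈ bicolored S c δ ε) : G.IsProperColoring ↑S (G.kempeSwap S c δ ε g₀) := by
  have hboundary : ∀ f ∈ S, ∀ g ∈ S, G.EdgeAdj f g → G.KempeReach S c δ ε g₀ f →
      ¬ G.KempeReach S c δ ε g₀ g → Equiv.swap δ ε (c f) ≠ c g := by
    intro f hf g hg hadj hrf hrg
    have hgD : g ∉ bicolored S c δ ε := fun hgD =>
      hrg (hrf.tail ⟨hrf.mem_bicolored h₀, hgD, hadj⟩)
    simp only [bicolored, mem_filter, not_and, not_or] at hgD
    obtain ⟨hgδ, hgε⟩ := hgD hg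
    rcases (mem_filter.mp (hrf.mem_bicolored h₀)).2 with h | h <;> rw [h]
    · rw [Equiv.swap_apply_left]; exact Ne.symm hgε
    · rw [Equiv.swap_apply_right]; exact Ne.symm hgδ
  intro f hf g hg hne hadj
  by_cases hrf : G.KempeReach S c δ ε g₀ f <;> by_cases hrg : G.KempeReach S c δ ε g₀ g
  · rw [kempeSwap_of_reach hrf, kempeSwap_of_reach hrg]
    exact fun h => hc f hf g hg hne hadj ((Equiv.swap δ ε).injective h)
  · rw [kempeSwap_of_reach hrf, kempeSwap_of_not_reach hrg]
    exact hboundary f hf g hg hadj hrf hrg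
  · rw [kempeSwap_of_not_reach hrf, kempeSwap_of_reach hrg]
    exact (hboundary g hg f hf hadj.symm hrg hrf).symm
  · rw [kempeSwap_of_not_reach hrf, kempeSwap_of_not_reach hrg]
    exact hc f hf g hg hne hadj

/-- Otherwise swapping `α` and `β` on the chain frees `β` at both ends of `uv`. -/
theorem IsMaxColorable.exists_kempeReach [DecidableEq E] (hS : G.IsMaxColorable k ↑S)
    (hc : G.IsProperColoring ↑S c) {e : E} (he : e ∉ S) {u v : V} (hends : G.ends e = s(u, v))
    {α β : Fin k} (hα : α ∉ G.colorsAt ↑S c u) (hβ : β ∉ G.colorsAt ↑S c v)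
    (hg₀ : g₀ ∈ S) (hug₀ : u ∈ G.ends g₀) (hcg₀ : c g₀ = β) :
    ∃ g, G.KempeReach S c α β g₀ g ∧ v ∈ G.ends g := by
  by_contra! hno
  have hβu : β ∉ G.colorsAt ↑S (G.kempeSwap S c α β g₀) u := by
    rintro ⟨f, hf, huf, hcf⟩
    by_cases hr : G.KempeReach S c α β g₀ f
    · rw [kempeSwap_of_reach hr, Equiv.swap_apply_eq_iff, Equiv.swap_apply_right] at hcf
      exact hα ⟨f, hf, huf, hcf⟩
    · rw [kempeSwap_of_not_reach hr] at hcf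
      exact hr (hc.eq_of_color_eq hg₀ hf hug₀ huf (hcg₀.trans hcf.symm) ▸ .refl)
  have hβv : β ∉ G.colorsAt ↑S (G.kempeSwap S c α β g₀) v := by
    rintro ⟨f, hf, hvf, hcf⟩
    rw [kempeSwap_of_not_reach fun hr => hno f hr hvf] at hcf
    exact hβ ⟨f, hf, hvf, hcf⟩
  have h₀ : g₀ ∈ bicolored S c α β := mem_filter.mpr ⟨hg₀, .inr hcg₀⟩
  refine hS.not_isProperColoring_insert rfl he
    ((hc.kempeSwap h₀).insert_update_of_notMem_colorsAt (ζ := β) ?_)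
  intro x hx
  rw [hends, Sym2.mem_iff] at hx
  rcases hx with rfl | rfl
  exacts [hβu, hβv]

variable [DecidableEq V]

lemma IsProperColoring.card_edgesAt_bicolored_le (hc : G.IsProperColoring ↑S c) (x : V) :
    (G.edgesAt (bicolored S c δ ε) x).card ≤ 2 := by
  have hinj : Set.InjOn c ↑(G.edgesAt (bicolored S c δ ε) x) := fun e he f hf =>
    hc.eq_of_color_eq (mem_filter.mp (mem_edgesAt.mp he).1).1
      (mem_filter.mp (mem_edgesAt.mp hf).1).1 (mem_edgesAt.mp he).2 (mem_edgesAt.mp hf).2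
  have hsub : (G.edgesAt (bicolored S c δ ε) x).image c ⊆ {δ, ε} := by
    intro γ hγ
    obtain ⟨e, he, rfl⟩ := mem_image.mp hγ
    rcases (mem_filter.mp (mem_edgesAt.mp he).1).2 with h | h <;> simp [h]
  rw [← card_image_of_injOn hinj]
  exact (card_le_card hsub).trans card_le_two

lemma IsProperColoring.card_edgesAt_bicolored_eq_one (hc : G.IsProperColoring ↑S c) {x : V}
    (hδ : δ ∈ G.colorsAt ↑S c x) (hε : ε ∉ G.colorsAt ↑S c x) :
    (G.edgesAt (bicolored S c δ ε) x).card = 1 := by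
  obtain ⟨g, hg, hxg, hcg⟩ := hδ
  refine card_eq_one.mpr ⟨g, eq_singleton_iff_unique_mem.mpr ⟨?_, fun f hf => ?_⟩⟩
  · exact mem_edgesAt.mpr ⟨mem_filter.mpr ⟨hg, .inl hcg⟩, hxg⟩
  obtain ⟨hfD, hxf⟩ := mem_edgesAt.mp hf
  obtain ⟨hfS, hcf | hcf⟩ := mem_filter.mp hfD
  · exact hc.eq_of_color_eq hfS hg hxf hxg (hcf.trans hcg.symm)
  · exact absurd ⟨f, hfS, hxf, hcf⟩ hε

variable [Fintype E]

lemma card_verts_kempeChain_le :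
    (G.verts (G.kempeChain S c δ ε g₀)).card ≤ (G.kempeChain S c δ ε g₀).card + 1 := by
  classical
  refine card_verts_le_card_add_one (mem_kempeChain.mpr .refl) fun F hFK hg₀F hne => ?_
  obtain ⟨g, hgK, hgF⟩ := exists_of_ssubset (ssubset_of_subset_of_ne hFK hne)
  suffices hexit : ∀ g, G.KempeReach S c δ ε g₀ g → g ∉ F →
      ∃ f ∈ F, ∃ h ∈ G.kempeChain S c δ ε g₀ \ F, G.EdgeAdj f h from
    hexit g (mem_kempeChain.mp hgK) hgF
  intro g hg
  induction hg with
  | refl => exact fun h => absurd hg₀F h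
  | @tail a b hra hstep ih =>
    intro hbF
    by_cases haF : a ∈ F
    · exact ⟨a, haF, b, mem_sdiff.mpr ⟨mem_kempeChain.mpr (hra.tail hstep), hbF⟩, hstep.2.2⟩
    · exact ih haF

lemma edgesAt_kempeChain {x : V} (h₀ : g₀ ∈ bicolored S c δ ε)
    (hx : x ∈ G.verts (G.kempeChain S c δ ε g₀)) :
    G.edgesAt (G.kempeChain S c δ ε g₀) x = G.edgesAt (bicolored S c δ ε) x := by
  obtain ⟨g, hg, hxg⟩ := mem_verts.mp hx
  ext f
  simp only [mem_edgesAt, mem_kempeChain]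
  refine ⟨fun ⟨hr, hxf⟩ => ⟨hr.mem_bicolored h₀, hxf⟩, fun ⟨hf, hxf⟩ => ⟨?_, hxf⟩⟩
  exact (mem_kempeChain.mp hg).tail ⟨(mem_kempeChain.mp hg).mem_bicolored h₀, hf, x, hxg, hxf⟩

/-- A Kempe chain is a path or a cycle, so it has at most two ends. -/
theorem IsProperColoring.eq_or_eq_or_eq_of_kempeEnds [Fintype V]
    (hc : G.IsProperColoring ↑S c) (h₀ : g₀ ∈ bicolored S c δ ε) {x y z : V}
    (hx : x ∈ G.verts (G.kempeChain S c δ ε g₀)) (hy : y ∈ G.verts (G.kempeChain S c δ ε g₀))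
    (hz : z ∈ G.verts (G.kempeChain S c δ ε g₀))
    (hx₁ : (G.edgesAt (bicolored S c δ ε) x).card = 1)
    (hy₁ : (G.edgesAt (bicolored S c δ ε) y).card = 1)
    (hz₁ : (G.edgesAt (bicolored S c δ ε) z).card = 1) : x = y ∨ x = z ∨ y = z := by
  have hends := card_filter_card_edgesAt_eq_one_le_two card_verts_kempeChain_le
    fun w => (card_le_card (edgesAt_mono (fun g hg => (mem_kempeChain.mp hg).mem_bicolored h₀)
      w)).trans (hc.card_edgesAt_bicolored_le (δ := δ) (ε := ε) w)
  have hsub : ({x, y, z} : Finset V) ⊆ (G.verts (G.kempeChain S c δ ε g₀)).filter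
      fun w => (G.edgesAt (G.kempeChain S c δ ε g₀) w).card = 1 := by
    intro w hw
    simp only [mem_insert, mem_singleton] at hw
    rcases hw with rfl | rfl | rfl <;> rw [mem_filter, edgesAt_kempeChain h₀ ‹_›] <;>
      exact ⟨‹_›, ‹_›⟩
  by_contra! hne
  have := card_le_card hsub
  rw [card_insert_of_notMem (by simp [hne.1, hne.2.1]), card_pair hne.2.2] at this
  omega

end Kempe

section MaximumThreeColorable

variable [DecidableEq V] [Fintype E] {G : Multigraph V E} {S : Finset E} {c : E → Fin 3}

lemma IsMaxColorable.mem_colorsAt_iff_of_forall_notMem (hG : G.IsCubic)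
    (hS : G.IsMaxColorable 3 ↑S) (hc : G.IsProperColoring ↑S c) {e : E} (he : e ∉ S) {x v : V}
    (hends : G.ends e = s(x, v)) {γ : Fin 3} (hv : ∀ ζ, ζ ≠ γ → ζ ∉ G.colorsAt ↑S c v)
    (ζ : Fin 3) : ζ ∈ G.colorsAt ↑S c x ↔ ζ ≠ γ := by
  classical
  have hends' := hends.trans Sym2.eq_swap
  refine ⟨fun hζx hζγ => ?_, fun hζγ => hS.mem_colorsAt_of_notMem hc he hends' (hv ζ hζγ)⟩
  obtain ⟨η, hη⟩ := exists_notMem_colorsAt (c := c)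
    (lt_of_le_of_lt (hG.card_edgesAt_le_two he (G.mem_ends_left hends)) (by norm_num))
  exact hη (hS.mem_colorsAt_of_notMem hc he hends' (hv η (by rintro rfl; exact hη (hζγ ▸ hζx))))

/-- At a vertex `v` of degree at most one, the far ends `w` and `z` of two uncovered edges at `v`
would, together with `v`, be three ends of a single Kempe chain. -/
theorem IsMaxColorable.two_le_card_edgesAt [Fintype V] (hG : G.IsCubic)
    (hS : G.IsMaxColorable 3 ↑S) (hc : G.IsProperColoring ↑S c) (v : V) :
    2 ≤ (G.edgesAt S v).card := by
  classical
  by_contra! hv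
  obtain ⟨e, f, hef, he, hf, hve, hvf⟩ :=
    hG.exists_ne_notMem_of_card_edgesAt_le_one (Nat.le_of_lt_succ hv)
  obtain ⟨w, hwv, hew⟩ := G.exists_ends_eq_of_mem hve
  obtain ⟨z, hzv, hfz⟩ := G.exists_ends_eq_of_mem hvf
  obtain ⟨g₀, hg₀, hvg₀⟩ : ∃ g₀ ∈ S, v ∈ G.ends g₀ := by
    obtain ⟨ζ, hζ⟩ := exists_notMem_colorsAt (c := c)
      (lt_of_le_of_lt (hG.card_edgesAt_le_two he (G.mem_ends_right hew)) (by norm_num))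
    obtain ⟨g, hg, hvg, -⟩ := hS.mem_colorsAt_of_notMem hc he (hew.trans Sym2.eq_swap) hζ
    exact ⟨g, hg, hvg⟩
  have hγ : ∀ ζ, ζ ≠ c g₀ → ζ ∉ G.colorsAt ↑S c v := by
    rintro ζ hζ ⟨g, hg, hvg, rfl⟩
    exact hζ (congrArg c (card_le_one.mp (Nat.le_of_lt_succ hv) g
      (mem_edgesAt.mpr ⟨hg, hvg⟩) g₀ (mem_edgesAt.mpr ⟨hg₀, hvg₀⟩)))
  have hfar : ∀ {h : E} {x : V}, h ∉ S → G.ends h = s(v, x) →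
      ∀ ζ, ζ ∈ G.colorsAt ↑S c x ↔ ζ ≠ c g₀ := fun hh hends =>
    hS.mem_colorsAt_iff_of_forall_notMem hG hc hh (hends.trans Sym2.eq_swap) hγ
  have hwz : w ≠ z := by
    rintro rfl
    have h2 := card_le_card_edgesAt_of_subset_colorsAt (S := S) (v := w)
      (s := univ.erase (c g₀)) fun ζ hζ => (hfar he hew ζ).mpr (ne_of_mem_erase hζ)
    rw [card_erase_of_mem (mem_univ _), card_univ, Fintype.card_fin] at h2
    have := hG.card_edgesAt_le_one hef he hf (G.mem_ends_right hew) (G.mem_ends_right hfz)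
    omega
  obtain ⟨α, hα⟩ := exists_ne (c g₀)
  have h₀ : g₀ ∈ bicolored S c α (c g₀) := mem_filter.mpr ⟨hg₀, .inr rfl⟩
  have hend : ∀ {h : E} {x : V}, h ∉ S → G.ends h = s(v, x) →
      x ∈ G.verts (G.kempeChain S c α (c g₀) g₀) ∧
        (G.edgesAt (bicolored S c α (c g₀)) x).card = 1 := by
    intro h x hh hends
    obtain ⟨g, hg, hxg⟩ := hS.exists_kempeReach hc hh hends (hγ α hα)
      (fun h' => (hfar hh hends _).mp h' rfl) hg₀ hvg₀ rfl
    exact ⟨mem_verts.mpr ⟨g, mem_kempeChain.mpr hg, hxg⟩, hc.card_edgesAt_bicolored_eq_one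
      ((hfar hh hends α).mpr hα) fun h' => (hfar hh hends _).mp h' rfl⟩
  have hv₁ : (G.edgesAt (bicolored S c α (c g₀)) v).card = 1 := by
    rw [bicolored_comm]
    exact hc.card_edgesAt_bicolored_eq_one ⟨g₀, hg₀, hvg₀, rfl⟩ (hγ α hα)
  rcases hc.eq_or_eq_or_eq_of_kempeEnds h₀ (mem_verts.mpr ⟨g₀, mem_kempeChain.mpr .refl, hvg₀⟩)
    (hend he hew).1 (hend hf hfz).1 hv₁ (hend he hew).2 (hend hf hfz).2 with h | h | h
  exacts [hwv h.symm, hzv h.symm, hwz h]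

variable (G) in
def Claims {k : ℕ} (S : Finset E) (c : E → Fin k) (e : E) (w : V) : Prop :=
  ∃ u v g, G.ends e = s(u, v) ∧ g ∈ S ∧ G.ends g = s(u, w) ∧ c g ∉ G.colorsAt ↑S c v

theorem IsMaxColorable.exists_claims (hG : G.IsCubic) (hS : G.IsMaxColorable 3 ↑S)
    (hc : G.IsProperColoring ↑S c) {e : E} (he : e ∉ S) {u v : V} (hends : G.ends e = s(u, v)) :
    ∃ g w, g ∈ S ∧ G.ends g = s(u, w) ∧ c g ∉ G.colorsAt ↑S c v := by
  classical
  obtain ⟨β, hβ⟩ := exists_notMem_colorsAt (c := c)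
    (lt_of_le_of_lt (hG.card_edgesAt_le_two he (G.mem_ends_right hends)) (by norm_num))
  obtain ⟨g, hg, hug, rfl⟩ := hS.mem_colorsAt_of_notMem hc he (hends.trans Sym2.eq_swap) hβ
  obtain ⟨w, -, hgw⟩ := G.exists_ends_eq_of_mem hug
  exact ⟨g, w, hg, hgw, hβ⟩

variable [Fintype V]

theorem IsMaxColorable.card_edgesAt_eq_two (hG : G.IsCubic) (hS : G.IsMaxColorable 3 ↑S)
    (hc : G.IsProperColoring ↑S c) {e : E} (he : e ∉ S) {x : V} (hx : x ∈ G.ends e) :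
    (G.edgesAt S x).card = 2 :=
  le_antisymm (hG.card_edgesAt_le_two he hx) (hS.two_le_card_edgesAt hG hc x)

theorem IsMaxColorable.eq_of_notMem_of_mem_ends (hG : G.IsCubic) (hS : G.IsMaxColorable 3 ↑S)
    (hc : G.IsProperColoring ↑S c) {e f : E} (he : e ∉ S) (hf : f ∉ S) {x : V}
    (hxe : x ∈ G.ends e) (hxf : x ∈ G.ends f) : e = f := by
  by_contra hef
  have := hG.card_edgesAt_le_one hef he hf hxe hxf
  have := hS.card_edgesAt_eq_two hG hc he hxe
  omega

theorem IsMaxColorable.eq_or_eq_or_eq_of_mem_colorsAt (hG : G.IsCubic)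
    (hS : G.IsMaxColorable 3 ↑S) (hc : G.IsProperColoring ↑S c) {e : E} (he : e ∉ S) {z : V}
    (hz : z ∈ G.ends e) {a b d : Fin 3} (ha : a ∈ G.colorsAt ↑S c z)
    (hb : b ∈ G.colorsAt ↑S c z) (hd : d ∈ G.colorsAt ↑S c z) : a = b ∨ a = d ∨ b = d := by
  by_contra! hne
  have := card_le_card_edgesAt_of_subset_colorsAt (s := {a, b, d}) fun ζ hζ => by
    simp only [mem_insert, mem_singleton] at hζ
    rcases hζ with rfl | rfl | rfl <;> assumption
  rw [card_insert_of_notMem (by simp [hne.1, hne.2.1]), card_pair hne.2.2,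
    hS.card_edgesAt_eq_two hG hc he hz] at this
  omega

theorem IsMaxColorable.two_mul_card_eq (hG : G.IsCubic) (hS : G.IsMaxColorable 3 ↑S)
    (hc : G.IsProperColoring ↑S c) :
    2 * S.card = 2 * Fintype.card V + (G.fullVerts S).card := by
  rw [← G.sum_card_edgesAt, fullVerts, card_filter, ← card_univ, mul_comm 2, ← smul_eq_mul,
    ← sum_const, ← sum_add_distrib]
  refine sum_congr rfl fun v _ => ?_
  have := hS.two_le_card_edgesAt hG hc v
  have := hG.card_edgesAt_le S v
  split_ifs <;> omega

end MaximumThreeColorable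

section Claims

variable [DecidableEq V] [Fintype V] [Fintype E] {G : Multigraph V E} {S : Finset E}
  {c : E → Fin 3}

/-- Otherwise rotating `e` into `S` in place of the claiming edge gives a maximum colorable
subgraph with one more full vertex. -/
theorem IsMaxColorable.mem_fullVerts_of_claims (hG : G.IsCubic) (hS : G.IsMaxColorable 3 ↑S)
    (hc : G.IsProperColoring ↑S c)
    (hfull : ∀ T : Finset E, G.IsMaxColorable 3 ↑T → (G.fullVerts T).card ≤ (G.fullVerts S).card)
    {e : E} (he : e ∉ S) {w : V} (hw : G.Claims S c e w) : w ∈ G.fullVerts S := by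
  classical
  obtain ⟨u, v, g, hends, hg, hgends, hgv⟩ := hw
  by_contra hwS
  set T := insert e (S.erase g)
  have hT : G.IsMaxColorable 3 ↑T :=
    hS.of_card_eq ⟨_, hc.rotate hends hg (G.mem_ends_left hgends) hgv⟩ (card_insert_erase he hg)
  have hvg : v ∉ G.ends g := fun h => hgv ⟨g, hg, h, rfl⟩
  have hdeg₂ : ∀ x ∈ G.ends e, x ∉ G.fullVerts S := fun x hx => by
    rw [mem_fullVerts, hS.card_edgesAt_eq_two hG hc he hx]
    omega
  have hsub : insert v (G.fullVerts S) ⊆ G.fullVerts T := by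
    intro x hx
    rw [mem_fullVerts, edgesAt_insert_erase]
    · rcases mem_insert.mp hx with rfl | hx
      · rw [if_pos (G.mem_ends_right hends),
          card_insert_of_notMem fun h => he (mem_edgesAt.mp h).1,
          hS.card_edgesAt_eq_two hG hc he (G.mem_ends_right hends)]
      · rw [if_neg fun h => hdeg₂ x h hx]
        exact mem_fullVerts.mp hx
    · rcases mem_insert.mp hx with rfl | hx
      · exact hvg
      · rw [hgends, Sym2.mem_iff]
        rintro (rfl | rfl)
        exacts [hdeg₂ x (G.mem_ends_left hends) hx, hwS hx]
  have := card_le_card hsub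
  rw [card_insert_of_notMem (hdeg₂ v (G.mem_ends_right hends))] at this
  have := hfull T hT
  omega

/-- Otherwise rotate `e` into `S` in place of `g`, recolor `g'` with the color of `g`, and add
`f` with the old color of `g'`. -/
theorem IsMaxColorable.mem_colorsAt_of_claims (hG : G.IsCubic) (hS : G.IsMaxColorable 3 ↑S)
    (hc : G.IsProperColoring ↑S c) {e f g g' : E} {p q x y w : V}
    (he : e ∉ S) (hends_e : G.ends e = s(p, q)) (hg : g ∈ S) (hends_g : G.ends g = s(p, w))
    (hgq : c g ∉ G.colorsAt ↑S c q)
    (hf : f ∉ S) (hends_f : G.ends f = s(x, y)) (hg' : g' ∈ S) (hends_g' : G.ends g' = s(x, w))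
    (hg'y : c g' ∉ G.colorsAt ↑S c y) (hfe : f ≠ e) :
    c g ∈ G.colorsAt ↑S c x := by
  classical
  by_contra hgx
  have hnot_e : ∀ {z}, z ∈ G.ends f → z ∉ G.ends e := fun hzf hze =>
    hfe (hS.eq_of_notMem_of_mem_ends hG hc hf he hzf hze)
  have hwe : w ∉ G.ends e := by
    rw [hends_e, Sym2.mem_iff]
    rintro (rfl | rfl)
    exacts [G.ne_of_ends_eq hends_g rfl, hgq ⟨g, hg, G.mem_ends_right hends_g, rfl⟩]
  have hg'g : g' ≠ g := by
    rintro rfl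
    exact hgx ⟨g', hg', G.mem_ends_left hends_g', rfl⟩
  set T := insert e (S.erase g)
  have hT : ∀ {h z}, h ∈ T → z ∈ G.ends h → z ∉ G.ends e →
      h ∈ S ∧ h ≠ g ∧ Function.update c e (c g) h = c h := by
    intro h z hh hzh hze
    obtain rfl | hh := mem_insert.mp hh
    · exact absurd hzh hze
    · exact ⟨mem_of_mem_erase hh, ne_of_mem_erase hh,
        Function.update_of_ne (by rintro rfl; exact hze hzh) _ _⟩
  have hg'T : g' ∈ T := mem_insert_of_mem (mem_erase.mpr ⟨hg'g, hg'⟩)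
  have hcg' := (hT hg'T (G.mem_ends_left hends_g') (hnot_e (G.mem_ends_left hends_f))).2.2
  refine hS.not_isProperColoring_insert (card_insert_erase he hg)
    (fun h => (mem_insert.mp h).elim hfe fun h => hf (mem_of_mem_erase h))
    ((hc.rotate hends_e hg (G.mem_ends_left hends_g) hgq).insert_update_update hg'T hends_g'
      hends_f (ζ := c g) ?_ ?_ ?_ ?_)
  · rw [hcg']
    exact fun h => hg'g (hc.eq_of_color_eq hg' hg (G.mem_ends_right hends_g')
      (G.mem_ends_right hends_g) h.symm)
  · rintro ⟨h, hh, hxh, hch⟩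
    obtain ⟨hhS, -, hc₁h⟩ := hT (mem_of_mem_erase hh) hxh (hnot_e (G.mem_ends_left hends_f))
    exact hgx ⟨h, hhS, hxh, hc₁h.symm.trans hch⟩
  · rintro ⟨h, hh, hwh, hch⟩
    obtain ⟨hhS, hhg, hc₁h⟩ := hT (mem_of_mem_erase hh) hwh hwe
    exact hhg (hc.eq_of_color_eq hhS hg hwh (G.mem_ends_right hends_g) (hc₁h.symm.trans hch))
  · rintro ⟨h, hh, hyh, hch⟩
    obtain ⟨hhS, -, hc₁h⟩ := hT hh hyh (hnot_e (G.mem_ends_right hends_f))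
    exact hg'y ⟨h, hhS, hyh, hc₁h.symm.trans (hch.trans hcg')⟩

lemma IsMaxColorable.ne_of_claims (hG : G.IsCubic) (hS : G.IsMaxColorable 3 ↑S)
    (hc : G.IsProperColoring ↑S c) {e f g g' : E} {p q x y w : V}
    (he : e ∉ S) (hends_e : G.ends e = s(p, q)) (hends_g : G.ends g = s(p, w))
    (hf : f ∉ S) (hends_f : G.ends f = s(x, y)) (hends_g' : G.ends g' = s(x, w))
    (hfe : f ≠ e) : g ≠ g' := by
  rintro rfl
  rcases Sym2.eq_iff.mp (hends_g.symm.trans hends_g') with ⟨rfl, -⟩ | ⟨rfl, rfl⟩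
  · exact hfe (hS.eq_of_notMem_of_mem_ends hG hc hf he (G.mem_ends_left hends_f)
      (G.mem_ends_left hends_e))
  · exact G.ne_of_ends_eq hends_g rfl

/-- Of three claimants of `w`, the claiming end of the first would carry the three distinct
colors of the claiming edges. -/
theorem IsMaxColorable.eq_or_eq_or_eq_of_claims (hG : G.IsCubic) (hS : G.IsMaxColorable 3 ↑S)
    (hc : G.IsProperColoring ↑S c) {e₁ e₂ e₃ : E} {w : V} (he₁ : e₁ ∉ S) (he₂ : e₂ ∉ S)
    (he₃ : e₃ ∉ S) (h₁ : G.Claims S c e₁ w) (h₂ : G.Claims S c e₂ w) (h₃ : G.Claims S c e₃ w) :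
    e₁ = e₂ ∨ e₁ = e₃ ∨ e₂ = e₃ := by
  by_contra! hne
  obtain ⟨h₁₂, h₁₃, h₂₃⟩ := hne
  obtain ⟨z₁, t₁, g₁, hends₁, hg₁, hgends₁, hmiss₁⟩ := h₁
  obtain ⟨z₂, t₂, g₂, hends₂, hg₂, hgends₂, hmiss₂⟩ := h₂
  obtain ⟨z₃, t₃, g₃, hends₃, hg₃, hgends₃, hmiss₃⟩ := h₃
  have hcol : ∀ {g g' : E}, g ∈ S → g' ∈ S → g ≠ g' → w ∈ G.ends g → w ∈ G.ends g' →
      c g ≠ c g' := fun hg hg' hne hw hw' => hc _ hg _ hg' hne ⟨w, hw, hw'⟩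
  rcases hS.eq_or_eq_or_eq_of_mem_colorsAt hG hc he₁ (G.mem_ends_left hends₁)
    ⟨g₁, hg₁, G.mem_ends_left hgends₁, rfl⟩
    (hS.mem_colorsAt_of_claims hG hc he₂ hends₂ hg₂ hgends₂ hmiss₂ he₁ hends₁ hg₁ hgends₁ hmiss₁
      h₁₂)
    (hS.mem_colorsAt_of_claims hG hc he₃ hends₃ hg₃ hgends₃ hmiss₃ he₁ hends₁ hg₁ hgends₁ hmiss₁
      h₁₃) with h | h | h
  · exact hcol hg₁ hg₂ (hS.ne_of_claims hG hc he₁ hends₁ hgends₁ he₂ hends₂ hgends₂ h₁₂.symm)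
      (G.mem_ends_right hgends₁) (G.mem_ends_right hgends₂) h
  · exact hcol hg₁ hg₃ (hS.ne_of_claims hG hc he₁ hends₁ hgends₁ he₃ hends₃ hgends₃ h₁₃.symm)
      (G.mem_ends_right hgends₁) (G.mem_ends_right hgends₃) h
  · exact hcol hg₂ hg₃ (hS.ne_of_claims hG hc he₂ hends₂ hgends₂ he₃ hends₃ hgends₃ h₂₃.symm)
      (G.mem_ends_right hgends₂) (G.mem_ends_right hgends₃) h

/-- An uncovered edge `e = uv` claims a vertex through `u` and one through `v`; if both are `w`,
the claiming end of another claimant of `w` would carry three colors. -/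
theorem IsMaxColorable.not_claims_of_forall_claims_eq (hG : G.IsCubic)
    (hS : G.IsMaxColorable 3 ↑S) (hc : G.IsProperColoring ↑S c) {e f : E} {w : V} (he : e ∉ S)
    (hsingle : ∀ w', G.Claims S c e w' → w' = w) (hf : f ∉ S) (hfe : f ≠ e) :
    ¬ G.Claims S c f w := by
  rintro ⟨x, y, g, hends_f, hg, hends_g, hmiss⟩
  obtain ⟨u, v, -, hends⟩ := G.exists_ends_eq e
  have hends' : G.ends e = s(v, u) := hends.trans Sym2.eq_swap
  obtain ⟨g₁, w₁, hg₁, hends₁, hmiss₁⟩ := hS.exists_claims hG hc he hends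
  obtain ⟨g₂, w₂, hg₂, hends₂, hmiss₂⟩ := hS.exists_claims hG hc he hends'
  rw [hsingle w₁ ⟨u, v, g₁, hends, hg₁, hends₁, hmiss₁⟩] at hends₁
  rw [hsingle w₂ ⟨v, u, g₂, hends', hg₂, hends₂, hmiss₂⟩] at hends₂
  have hg₁₂ : g₁ ≠ g₂ := by
    rintro rfl
    exact hmiss₁ ⟨g₁, hg₁, G.mem_ends_left hends₂, rfl⟩
  have hcol : ∀ {g g' : E}, g ∈ S → g' ∈ S → g ≠ g' → w ∈ G.ends g → w ∈ G.ends g' →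
      c g ≠ c g' := fun hg hg' hne hw hw' => hc _ hg _ hg' hne ⟨w, hw, hw'⟩
  rcases hS.eq_or_eq_or_eq_of_mem_colorsAt hG hc hf (G.mem_ends_left hends_f)
    (hS.mem_colorsAt_of_claims hG hc he hends hg₁ hends₁ hmiss₁ hf hends_f hg hends_g hmiss hfe)
    (hS.mem_colorsAt_of_claims hG hc he hends' hg₂ hends₂ hmiss₂ hf hends_f hg hends_g hmiss hfe)
    ⟨g, hg, G.mem_ends_left hends_g, rfl⟩ with h | h | h
  · exact hcol hg₁ hg₂ hg₁₂ (G.mem_ends_right hends₁) (G.mem_ends_right hends₂) h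
  · exact hcol hg₁ hg (hS.ne_of_claims hG hc he hends hends₁ hf hends_f hends_g hfe)
      (G.mem_ends_right hends₁) (G.mem_ends_right hends_g) h
  · exact hcol hg₂ hg (hS.ne_of_claims hG hc he hends' hends₂ hf hends_f hends_g hfe)
      (G.mem_ends_right hends₂) (G.mem_ends_right hends_g) h

theorem IsMaxColorable.card_compl_le_card_fullVerts [DecidableEq E] (hG : G.IsCubic)
    (hS : G.IsMaxColorable 3 ↑S) (hc : G.IsProperColoring ↑S c)
    (hfull : ∀ T : Finset E, G.IsMaxColorable 3 ↑T → (G.fullVerts T).card ≤ (G.fullVerts S).card) :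
    Sᶜ.card ≤ (G.fullVerts S).card := by
  classical
  calc Sᶜ.card ≤ (Sᶜ.biUnion fun e => univ.filter (G.Claims S c e)).card := by
        refine card_le_card_biUnion_of_forall_eq_or_eq_or_eq (fun e he => ?_)
          (fun w e₁ h₁ e₂ h₂ e₃ h₃ hw₁ hw₂ hw₃ => ?_) fun e he f hf hfe w hw => ?_
        · obtain ⟨u, v, -, hends⟩ := G.exists_ends_eq e
          obtain ⟨g, w, hg, hends_g, hmiss⟩ := hS.exists_claims hG hc (mem_compl.mp he) hends
          exact ⟨w, mem_filter.mpr ⟨mem_univ w, u, v, g, hends, hg, hends_g, hmiss⟩⟩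
        · exact hS.eq_or_eq_or_eq_of_claims hG hc (mem_compl.mp h₁) (mem_compl.mp h₂)
            (mem_compl.mp h₃) (mem_filter.mp hw₁).2 (mem_filter.mp hw₂).2 (mem_filter.mp hw₃).2
        · refine fun hwf => hS.not_claims_of_forall_claims_eq hG hc (mem_compl.mp he)
            (fun w' hw' => ?_) (mem_compl.mp hf) (Ne.symm hfe) (mem_filter.mp hwf).2
          exact mem_singleton.mp (hw ▸ mem_filter.mpr ⟨mem_univ w', hw'⟩)
    _ ≤ (G.fullVerts S).card := card_le_card <| biUnion_subset.mpr fun e he w hw =>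
        hS.mem_fullVerts_of_claims hG hc hfull (mem_compl.mp he) (mem_filter.mp hw).2

theorem IsMaxColorable.seven_mul_card_le (hG : G.IsCubic) (hS : G.IsMaxColorable 3 ↑S)
    (hc : G.IsProperColoring ↑S c)
    (hfull : ∀ T : Finset E, G.IsMaxColorable 3 ↑T → (G.fullVerts T).card ≤ (G.fullVerts S).card) :
    7 * Fintype.card V ≤ 6 * S.card := by
  classical
  have := hS.two_mul_card_eq hG hc
  have := hS.card_compl_le_card_fullVerts hG hc hfull
  have := hG.three_mul_card
  have := card_compl S
  have := card_le_univ S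
  omega

variable (G) in
theorem exists_isMaxColorable_forall_card_fullVerts_le :
    ∃ S : Finset E, ∃ c : E → Fin 3, G.IsProperColoring ↑S c ∧ G.IsMaxColorable 3 ↑S ∧
      ∀ T : Finset E, G.IsMaxColorable 3 ↑T → (G.fullVerts T).card ≤ (G.fullVerts S).card := by
  classical
  obtain ⟨S₀, hS₀, hmax₀⟩ := exists_max_image (univ.filter fun T : Finset E => G.Colorable 3 ↑T)
    card ⟨∅, mem_filter.mpr ⟨mem_univ _, fun _ => 0, fun e he => absurd he (by simp)⟩⟩
  have hS₀' : G.IsMaxColorable 3 ↑S₀ := by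
    refine ⟨(mem_filter.mp hS₀).2, fun R hR => ?_⟩
    rw [← R.toFinite.coe_toFinset, Set.ncard_coe_finset, Set.ncard_coe_finset]
    exact hmax₀ _ (mem_filter.mpr ⟨mem_univ _, by rwa [R.toFinite.coe_toFinset]⟩)
  obtain ⟨S, hS, hmax⟩ := exists_max_image
    (univ.filter fun T : Finset E => G.IsMaxColorable 3 ↑T) (fun T => (G.fullVerts T).card)
    ⟨S₀, mem_filter.mpr ⟨mem_univ _, hS₀'⟩⟩
  obtain ⟨c, hc⟩ := (mem_filter.mp hS).2.1
  exact ⟨S, c, hc, (mem_filter.mp hS).2, fun T hT => hmax T (mem_filter.mpr ⟨mem_univ _, hT⟩)⟩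

end Claims

theorem ncard_le_nu [Finite E] (G : Multigraph V E) {k : ℕ} {S : Set E} (hS : G.Colorable k S) :
    S.ncard ≤ G.nu k :=
  le_csSup ⟨Nat.card E, by rintro _ ⟨T, -, rfl⟩; exact Set.ncard_le_card T⟩ ⟨S, hS, rfl⟩

end Multigraph

/-- For every cubic graph `G`, `ν₃(G) ≥ (7/6)·|V(G)|`. -/
theorem nu_three_ge_seven_sixths
    {V E : Type} [Fintype V] [Fintype E] (G : Multigraph V E) (hG : G.IsCubic) :
    (G.nu 3 : ℚ) ≥ (7 / 6 : ℚ) * (Fintype.card V : ℚ) := by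
  classical
  obtain ⟨S, c, hc, hS, hfull⟩ := G.exists_isMaxColorable_forall_card_fullVerts_le
  have hcount := hS.seven_mul_card_le hG hc hfull
  have hnu : S.card ≤ G.nu 3 := by simpa using G.ncard_le_nu hS.1
  have : (7 : ℚ) * Fintype.card V ≤ 6 * G.nu 3 := by exact_mod_cast hcount.trans (by omega)
  linarith
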